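/- Let p = φ − 1 (so q = 1 − p = p²). For all i, j, a, b ∈ ℕ with a < 2^i and b < 2^j, the sum f_i(a) + f_j(b) equals either f_{i+j}(c) for some c ∈ ℕ with c < 2^{i+j}, or 1 + f_{i+j+1}(d) for some d ∈ ℕ with d < 2^{i+j+1}. -/
import Mathlib

/-- The golden ratio `φ = (1 + √5) / 2`. -/
noncomputable def phi : ℝ := (1 + Real.sqrt 5) / 2

/-- Given `p ∈ (0,1)` (with `q = 1 - p`), the recursively defined division functions
`f_ℓ : {0, …, 2^ℓ - 1} → [0, 1)`:
`f₀ 0 = 0`, `f_{ℓ+1} n = p * f_ℓ n` if `n < 2^ℓ`, and `f_{ℓ+1} n = p + q * f_ℓ (n - 2^ℓ)`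
otherwise. -/
noncomputable def fcut (p : ℝ) : ℕ → ℕ → ℝ
  | 0, _ => 0
  | ℓ + 1, n => if n < 2 ^ ℓ then p * fcut p ℓ n else p + (1 - p) * fcut p ℓ (n - 2 ^ ℓ)

lemma fcut_zero (p : ℝ) (n : ℕ) : fcut p 0 n = 0 := rfl

lemma fcut_lt (p : ℝ) {ℓ n : ℕ} (h : n < 2 ^ ℓ) : fcut p (ℓ + 1) n = p * fcut p ℓ n := by
  rw [fcut, if_pos h]

lemma fcut_ge (p : ℝ) {ℓ n : ℕ} (h : n < 2 ^ ℓ) :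
    fcut p (ℓ + 1) (2 ^ ℓ + n) = p + (1 - p) * fcut p ℓ n := by
  rw [fcut, if_neg (by omega), Nat.add_sub_cancel_left]

lemma fcut_pad (p : ℝ) : ∀ (ℓ n : ℕ), n < 2 ^ ℓ → fcut p (ℓ + 1) (2 * n) = fcut p ℓ n := by
  intro ℓ
  induction ℓ with
  | zero => intro n hn; interval_cases n; simp [fcut]
  | succ t ih =>
    intro n hn
    rcases Nat.lt_or_ge n (2 ^ t) with h | h
    · have h2 : 2 * n < 2 ^ (t + 1) := by
        have : (2:ℕ)^(t+1) = 2 * 2^t := by ring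
        omega
      rw [fcut_lt p h2, ih n h, fcut_lt p h]
    · obtain ⟨n', rfl⟩ := Nat.exists_eq_add_of_le h
      have hn' : n' < 2 ^ t := by
        have : (2:ℕ)^(t+1) = 2 * 2^t := by ring
        omega
      have h2 : 2 * (2 ^ t + n') = 2 ^ (t+1) + 2 * n' := by ring
      have h3 : 2 * n' < 2 ^ (t+1) := by
        have : (2:ℕ)^(t+1) = 2 * 2^t := by ring
        omega
      rw [h2, fcut_ge p h3, ih n' hn', fcut_ge p hn']

section Golden
variable {p : ℝ}

/-- B₀ : p²(1+f_{k+1}(x)) = f_{k+2}(2^k+x) for x < 2^k -/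
lemma lemB0 (hp : p ^ 2 = 1 - p) {k x : ℕ} (hx : x < 2 ^ k) :
    p ^ 2 * (1 + fcut p (k + 1) x) = fcut p (k + 1 + 1) (2 ^ k + x) := by
  have h1 : 2 ^ k + x < 2 ^ (k + 1) := by
    have : (2:ℕ)^(k+1) = 2 * 2^k := by ring
    omega
  rw [fcut_lt p h1, fcut_ge p hx, fcut_lt p hx]
  linear_combination (p * fcut p k x) * hp

/-- C : p + p·f_{n+1}(e) is f_{n+1}(c) or 1 + p·f_{n+2}(e') with e' < 2^n -/
lemma lemC (hp : p ^ 2 = 1 - p) {n e : ℕ} (he : e < 2 ^ (n + 1)) :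
    (∃ c, c < 2 ^ (n + 1) ∧ p + p * fcut p (n + 1) e = fcut p (n + 1) c) ∨
    (∃ e', e' < 2 ^ n ∧ p + p * fcut p (n + 1) e = 1 + p * fcut p (n + 1 + 1) e') := by
  rcases Nat.lt_or_ge e (2 ^ n) with h | h
  · left
    refine ⟨2 ^ n + e, ?_, ?_⟩
    · have : (2:ℕ)^(n+1) = 2 * 2^n := by ring
      omega
    · rw [fcut_ge p h, fcut_lt p h]
      linear_combination (fcut p n e) * hp
  · right
    obtain ⟨e', rfl⟩ := Nat.exists_eq_add_of_le h
    have he' : e' < 2 ^ n := by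
      have : (2:ℕ)^(n+1) = 2 * 2^n := by ring
      omega
    have he'2 : e' < 2 ^ (n+1) := by
      have : (2:ℕ)^(n+1) = 2 * 2^n := by ring
      omega
    refine ⟨e', he', ?_⟩
    rw [fcut_ge p he', fcut_lt p he'2, fcut_lt p he']
    linear_combination (1 - p * fcut p n e') * hp

/-- A : for ℓ ≥ 1, p + f_ℓ(d) is f_ℓ(c) or 1 + p·f_{ℓ+1}(e) with e+1 < 2^{ℓ+1} -/
lemma lemA (hp : p ^ 2 = 1 - p) : ∀ ℓ, 0 < ℓ → ∀ d, d < 2 ^ ℓ →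
    (∃ c, c < 2 ^ ℓ ∧ p + fcut p ℓ d = fcut p ℓ c) ∨
    (∃ e, e + 1 < 2 ^ (ℓ + 1) ∧ p + fcut p ℓ d = 1 + p * fcut p (ℓ + 1) e) := by
  intro ℓ
  induction ℓ using Nat.strong_induction_on with
  | _ ℓ ih =>
    match ℓ with
    | 0 => intro h; exact absurd h (by norm_num)
    | 1 =>
      intro _ d hd
      have hf0 : fcut p 1 0 = 0 := by
        have h := fcut_lt p (ℓ := 0) (n := 0) (by norm_num)
        simpa [fcut_zero] using h
      have hf1 : fcut p 1 1 = p := by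
        have h := fcut_ge p (ℓ := 0) (n := 0) (by norm_num)
        simpa [fcut_zero] using h
      interval_cases d
      · left
        refine ⟨1, by norm_num, ?_⟩
        rw [hf0, hf1]; ring
      · right
        refine ⟨1, by norm_num, ?_⟩
        have hf2 : fcut p (1+1) 1 = p * p := by
          rw [fcut_lt p (show 1 < 2^1 by norm_num), hf1]
        rw [hf1, hf2]
        linear_combination (1 - p) * hp
    | (t + 2) =>
      intro _ d hd
      have e1 : (2:ℕ)^(t+1) = 2 * 2^t := by ring
      have e2 : (2:ℕ)^(t+2) = 4 * 2^t := by ring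
      have e3 : (2:ℕ)^(t+3) = 8 * 2^t := by ring
      have hpos : 0 < (2:ℕ)^t := pow_pos (by norm_num) t
      rcases Nat.lt_or_ge d (2 ^ t) with h | h
      · -- d < 2^t : case A1, c = 2*(2^t+d)
        left
        refine ⟨2 * (2 ^ t + d), by omega, ?_⟩
        have hlt1 : 2 ^ t + d < 2 ^ (t+1) := by omega
        have hg : fcut p (t+1+1) (2*(2^t+d)) = p + (1-p) * fcut p t d := by
          rw [fcut_pad p (t+1) _ hlt1, fcut_ge p h]
        have hd1 : d < 2 ^ (t+1) := by omega
        rw [show t+2 = t+1+1 from rfl, hg, fcut_lt p hd1, fcut_lt p h]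
        linear_combination (fcut p t d) * hp
      · rcases Nat.lt_or_ge d (2 ^ (t+1)) with h2 | h2
        · -- 2^t ≤ d < 2^{t+1} : case A2, e = 2*d'
          obtain ⟨d', rfl⟩ := Nat.exists_eq_add_of_le h
          have hd' : d' < 2 ^ t := by omega
          right
          refine ⟨2 * d', by omega, ?_⟩
          have hL : fcut p (t+1+1) (2^t + d') = p * (p + (1-p) * fcut p t d') := by
            rw [fcut_lt p h2, fcut_ge p hd']
          have hR : fcut p (t+2+1) (2 * d') = p * (p * fcut p t d') := by
            have hd'2 : 2*d' < 2^(t+1) := by omega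
            rw [show t+2+1 = t+1+1+1 from rfl, fcut_lt p (show 2*d' < 2^(t+1+1) by omega),
              fcut_pad p (t+1) d' (by omega), fcut_lt p hd']
          rw [show t+2 = t+1+1 from rfl] at hL ⊢
          rw [hL, hR]
          linear_combination (1 - p * fcut p t d') * hp
        · -- d ≥ 2^{t+1} : recurse
          obtain ⟨d', rfl⟩ := Nat.exists_eq_add_of_le h2
          have hd' : d' < 2 ^ (t+1) := by omega
          have hG : fcut p (t+1+1) (2^(t+1) + d') = p + (1-p) * fcut p (t+1) d' := fcut_ge p hd'
          rcases ih (t+1) (by omega) (by omega) d' hd' with ⟨c, hc, hEq⟩ | ⟨e₀, he₀, hEq⟩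
          · right
            refine ⟨2 * c, by omega, ?_⟩
            have hR : fcut p (t+2+1) (2*c) = p * fcut p (t+1) c := by
              rw [show t+2+1 = t+1+1+1 from rfl, fcut_lt p (show 2*c < 2^(t+1+1) by omega),
                fcut_pad p (t+1) c (by omega)]
            rw [show t+2 = t+1+1 from rfl, hG, hR]
            linear_combination (1 - p - fcut p (t+1) d') * hp + p^2 * hEq
          · right
            refine ⟨2 ^ (t+2) + e₀, by omega, ?_⟩
            have he₀2 : e₀ < 2 ^ (t+2) := by omega
            have hR : fcut p (t+2+1) (2^(t+2) + e₀) = p + (1-p) * fcut p (t+1+1) e₀ :=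
              fcut_ge p he₀2
            rw [show t+2 = t+1+1 from rfl] at hR ⊢
            rw [hG, hR]
            linear_combination (1 - p) * hEq


/-- G : for d+1 < 2^ℓ, p² + p·f_ℓ(d) = f_{ℓ+1}(x) with x+1 < 2^{ℓ+1} -/
lemma lemG (hp : p ^ 2 = 1 - p) : ∀ ℓ d, d + 1 < 2 ^ ℓ →
    ∃ x, x + 1 < 2 ^ (ℓ + 1) ∧ p ^ 2 + p * fcut p ℓ d = fcut p (ℓ + 1) x := by
  intro ℓ
  induction ℓ using Nat.strong_induction_on with
  | _ ℓ ih =>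
    match ℓ with
    | 0 => intro d hd; omega
    | 1 =>
      intro d hd
      have hd0 : d = 0 := by omega
      subst hd0
      refine ⟨1, by norm_num, ?_⟩
      have hf0 : fcut p 1 0 = 0 := by
        have h := fcut_lt p (ℓ := 0) (n := 0) (by norm_num)
        simpa [fcut_zero] using h
      have hf1 : fcut p 1 1 = p := by
        have h := fcut_ge p (ℓ := 0) (n := 0) (by norm_num)
        simpa [fcut_zero] using h
      have hf2 : fcut p (1+1) 1 = p * p := by
        rw [fcut_lt p (show 1 < 2^1 by norm_num), hf1]
      rw [hf0, hf2]; ring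
    | (t + 2) =>
      intro d hd
      have e1 : (2:ℕ)^(t+1) = 2 * 2^t := by ring
      have e2 : (2:ℕ)^(t+2) = 4 * 2^t := by ring
      have e3 : (2:ℕ)^(t+3) = 8 * 2^t := by ring
      have hpos : 0 < (2:ℕ)^t := pow_pos (by norm_num) t
      rcases Nat.lt_or_ge d (2 ^ t) with h | h
      · -- (a) d < 2^t
        refine ⟨2 * (2 ^ t + d), by omega, ?_⟩
        have hB := lemB0 hp (k := t) (x := d) h
        have hpad : fcut p (t+2+1) (2*(2^t+d)) = fcut p (t+2) (2^t+d) :=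
          fcut_pad p (t+2) _ (by omega)
        have h1 : fcut p (t+1+1) d = p * fcut p (t+1) d := fcut_lt p (by omega)
        rw [show t+2 = t+1+1 from rfl] at hpad ⊢
        rw [hpad, h1, ← hB]
        ring
      · rcases Nat.lt_or_ge d (2 ^ (t+1)) with h2 | h2
        · -- (b) 2^t ≤ d < 2^{t+1}
          obtain ⟨d', rfl⟩ := Nat.exists_eq_add_of_le h
          have hd' : d' < 2 ^ t := by omega
          refine ⟨2 ^ (t+2) + d', by omega, ?_⟩
          have hL : fcut p (t+1+1) (2^t + d') = p * (p + (1-p) * fcut p t d') := by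
            rw [fcut_lt p h2, fcut_ge p hd']
          have hR : fcut p (t+2+1) (2^(t+2) + d') = p + (1-p) * (p * (p * fcut p t d')) := by
            rw [fcut_ge p (show d' < 2^(t+2) by omega),
              show t+2 = t+1+1 from rfl, fcut_lt p (show d' < 2^(t+1) by omega), fcut_lt p hd']
          rw [show t+2 = t+1+1 from rfl] at hR ⊢
          rw [hL, hR]
          linear_combination p * hp
        · -- (c) d ≥ 2^{t+1} : recurse at t+1
          obtain ⟨d', rfl⟩ := Nat.exists_eq_add_of_le h2
          have hd' : d' + 1 < 2 ^ (t+1) := by omega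
          obtain ⟨x₀, hx₀, hEqG⟩ := ih (t+1) (by omega) d' hd'
          refine ⟨2 ^ (t+2) + x₀, by omega, ?_⟩
          have hG : fcut p (t+1+1) (2^(t+1) + d') = p + (1-p) * fcut p (t+1) d' :=
            fcut_ge p (by omega)
          have hR : fcut p (t+2+1) (2^(t+2) + x₀) = p + (1-p) * fcut p (t+1+1) x₀ :=
            fcut_ge p (by omega)
          rw [show t+2 = t+1+1 from rfl] at hR ⊢
          rw [hG, hR]
          linear_combination p * hp + (1-p) * hEqG

/-- The mixed case: top bit of first argument is 1, of second is 0. -/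
lemma master_mix (hp : p ^ 2 = 1 - p) (N' : ℕ)
    (IH : ∀ i j a b, i + j ≤ N' → a < 2 ^ i → b < 2 ^ j →
      (∃ c, c < 2 ^ (i + j) ∧ fcut p i a + fcut p j b = fcut p (i + j) c) ∨
      (∃ d, d < 2 ^ (i + j) ∧ fcut p i a + fcut p j b = 1 + fcut p (i + j) d) ∨
      (∃ e, e + 1 < 2 ^ (i + j) ∧ fcut p i a + fcut p j b = 1 + p * fcut p (i + j) e)) :
    ∀ i' j' a' b, (i' + 1) + (j' + 1) ≤ N' + 1 → a' < 2 ^ i' → b < 2 ^ j' →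
      (∃ c, c < 2 ^ (i' + j' + 1 + 1) ∧
        fcut p (i' + 1) (2 ^ i' + a') + fcut p (j' + 1) b = fcut p (i' + j' + 1 + 1) c) ∨
      (∃ d, d < 2 ^ (i' + j' + 1 + 1) ∧
        fcut p (i' + 1) (2 ^ i' + a') + fcut p (j' + 1) b = 1 + fcut p (i' + j' + 1 + 1) d) ∨
      (∃ e, e + 1 < 2 ^ (i' + j' + 1 + 1) ∧
        fcut p (i' + 1) (2 ^ i' + a') + fcut p (j' + 1) b
          = 1 + p * fcut p (i' + j' + 1 + 1) e) := by
  intro i' j' a' b hN ha' hb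
  have E1 : (2:ℕ)^(i'+j'+1) = 2 * 2^(i'+j') := by ring
  have E2 : (2:ℕ)^(i'+j'+2) = 4 * 2^(i'+j') := by ring
  have E2' : (2:ℕ)^(i'+j'+1+1) = 4 * 2^(i'+j') := by ring
  have E3 : (2:ℕ)^(i'+1) = 2 * 2^i' := by ring
  have hposm : 0 < (2:ℕ)^(i'+j') := pow_pos (by norm_num) _
  have hfa : fcut p (i'+1) (2^i' + a') = p + (1-p) * fcut p i' a' := fcut_ge p ha'
  have hfb : fcut p (j'+1) b = p * fcut p j' b := fcut_lt p hb
  have hT := IH (i'+1) j' a' b (by omega) (by omega) hb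
  rw [fcut_lt p ha'] at hT
  rw [show i'+1+j' = i'+j'+1 from by omega] at hT
  rw [hfa, hfb]
  set A := fcut p i' a' with hA
  set B := fcut p j' b with hB
  rcases hT with ⟨c, hc, hEq⟩ | ⟨d, hd, hEq⟩ | ⟨d, hd1, hEq⟩
  · -- T = f_{m+1}(c) : use lemC
    rcases lemC hp (n := i'+j') (e := c) hc with ⟨c', hc', hEqC⟩ | ⟨e', he', hEqC⟩
    · left
      refine ⟨2 * c', by omega, ?_⟩
      rw [show i'+j'+1+1 = (i'+j'+1)+1 from rfl, fcut_pad p (i'+j'+1) c' hc']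
      linear_combination p * hEq + hEqC - A * hp
    · right; right
      refine ⟨e', by omega, ?_⟩
      linear_combination p * hEq + hEqC - A * hp
  · -- T = 1 + f_{m+1}(d)
    rcases Nat.lt_or_ge d (2 ^ (i'+j')) with hdm | hdm
    · -- d < 2^m : use lemA at level m
      rcases Nat.eq_zero_or_pos (i'+j') with hm0 | hm0
      · -- m = 0 : contradiction
        exfalso
        have hi0 : i' = 0 := by omega
        have hj0 : j' = 0 := by omega
        subst hi0; subst hj0
        have hd0 : d = 0 := by norm_num at hdm; exact hdm
        subst hd0
        rw [hA, hB] at hEq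
        rw [fcut_zero, fcut_zero] at hEq
        have hf10 : fcut p (0+0+1) 0 = p * fcut p 0 0 := fcut_lt p (by norm_num)
        rw [hf10, fcut_zero] at hEq
        norm_num at hEq
      · rw [fcut_lt p hdm] at hEq
        rcases lemA hp (i'+j') hm0 d hdm with ⟨c₀, hc₀, hEqA⟩ | ⟨e₀, he₀, hEqA⟩
        · right; right
          refine ⟨2 * c₀, by omega, ?_⟩
          rw [show i'+j'+1+1 = (i'+j'+1)+1 from rfl, fcut_pad p (i'+j'+1) c₀ (by omega),
            fcut_lt p hc₀]
          linear_combination p * hEq + p^2 * hEqA + (1 - p - A) * hp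
        · right; right
          refine ⟨2 ^ (i'+j'+1) + e₀, by omega, ?_⟩
          rw [show i'+j'+1+1 = (i'+j'+1)+1 from rfl, fcut_ge p (show e₀ < 2^(i'+j'+1) by omega)]
          linear_combination p * hEq + p^2 * hEqA + (1 - p - A + p * fcut p (i'+j'+1) e₀) * hp
    · -- d ≥ 2^m
      obtain ⟨e', rfl⟩ := Nat.exists_eq_add_of_le hdm
      have he' : e' < 2 ^ (i'+j') := by omega
      rw [fcut_ge p he'] at hEq
      right; left
      refine ⟨2 ^ (i'+j'+1) + e', by omega, ?_⟩
      rw [show i'+j'+1+1 = (i'+j'+1)+1 from rfl, fcut_ge p (show e' < 2^(i'+j'+1) by omega),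
        fcut_lt p he']
      linear_combination p * hEq + (1 - A) * hp
  · -- T = 1 + p·f_{m+1}(d) : use lemG
    obtain ⟨x₀, hx₀, hEqG⟩ := lemG hp (i'+j'+1) d hd1
    right; right
    refine ⟨x₀, by omega, ?_⟩
    rw [show i'+j'+1+1 = (i'+j'+1)+1 from rfl]
    linear_combination p * hEq + p * hEqG + (1 - p - A) * hp

lemma master (hp : p ^ 2 = 1 - p) : ∀ N i j a b, i + j ≤ N → a < 2 ^ i → b < 2 ^ j →
    (∃ c, c < 2 ^ (i + j) ∧ fcut p i a + fcut p j b = fcut p (i + j) c) ∨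
    (∃ d, d < 2 ^ (i + j) ∧ fcut p i a + fcut p j b = 1 + fcut p (i + j) d) ∨
    (∃ e, e + 1 < 2 ^ (i + j) ∧ fcut p i a + fcut p j b = 1 + p * fcut p (i + j) e) := by
  intro N
  induction N with
  | zero =>
    intro i j a b h ha hb
    have hi : i = 0 := by omega
    have hj : j = 0 := by omega
    subst hi; subst hj
    left
    exact ⟨0, by norm_num, by rw [fcut_zero, fcut_zero, fcut_zero]; norm_num⟩
  | succ N' IH =>
    intro i j a b h ha hb
    match i, j with
    | 0, j =>
      left
      refine ⟨b, by simpa using hb, ?_⟩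
      rw [fcut_zero, zero_add, Nat.zero_add]
    | i + 1, 0 =>
      left
      refine ⟨a, by simpa using ha, ?_⟩
      rw [fcut_zero, add_zero, Nat.add_zero]
    | i' + 1, j' + 1 =>
      have E1 : (2:ℕ)^(i'+j'+1) = 2 * 2^(i'+j') := by ring
      have E2 : (2:ℕ)^(i'+j'+2) = 4 * 2^(i'+j') := by ring
      have E3 : (2:ℕ)^(i'+1) = 2 * 2^i' := by ring
      have E4 : (2:ℕ)^(j'+1) = 2 * 2^j' := by ring
      have E5 : (2:ℕ)^(i'+1+(j'+1)) = 4 * 2^(i'+j') := by ring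
      have hposm : 0 < (2:ℕ)^(i'+j') := pow_pos (by norm_num) _
      have hposi : 0 < (2:ℕ)^i' := pow_pos (by norm_num) _
      have hposj : 0 < (2:ℕ)^j' := pow_pos (by norm_num) _
      rcases Nat.lt_or_ge a (2 ^ i') with ha0 | ha0
      · rcases Nat.lt_or_ge b (2 ^ j') with hb0 | hb0
        · -- case (0,0)
          have hT := IH i' j' a b (by omega) ha0 hb0
          rw [fcut_lt p ha0, fcut_lt p hb0]
          rcases hT with ⟨c, hc, hEq⟩ | ⟨d, hd, hEq⟩ | ⟨d, hd1, hEq⟩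
          · left
            refine ⟨2 * c, by omega, ?_⟩
            rw [show i'+1+(j'+1) = (i'+j'+1)+1 from by omega,
              fcut_pad p (i'+j'+1) c (by omega), fcut_lt p hc]
            linear_combination p * hEq
          · -- A + B = 1 + f_m(d)
            rcases Nat.eq_zero_or_pos (i'+j') with hm0 | hm0
            · exfalso
              have hi0 : i' = 0 := by omega
              have hj0 : j' = 0 := by omega
              subst hi0; subst hj0
              rw [fcut_zero, fcut_zero, fcut_zero] at hEq
              norm_num at hEq
            · obtain ⟨m₀, hm⟩ : ∃ m₀, i'+j' = m₀+1 := ⟨i'+j'-1, by omega⟩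
              rw [hm] at hEq hd
              have F1 : (2:ℕ)^(m₀+1) = 2 * 2^m₀ := by ring
              have F2 : (2:ℕ)^(i'+1+(j'+1)) = 8 * 2^m₀ := by
                rw [show i'+1+(j'+1) = m₀+3 from by omega]; ring
              have hposm0 : 0 < (2:ℕ)^m₀ := pow_pos (by norm_num) _
              rcases lemC hp (n := m₀) (e := d) hd with ⟨c', hc', hEqC⟩ | ⟨e', he', hEqC⟩
              · left
                refine ⟨2 * (2 * c'), by omega, ?_⟩
                rw [show i'+1+(j'+1) = (m₀+1+1)+1 from by omega,
                  fcut_pad p (m₀+1+1) (2*c') (by omega), fcut_pad p (m₀+1) c' hc']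
                linear_combination p * hEq + hEqC
              · right; right
                refine ⟨2 * e', by omega, ?_⟩
                rw [show i'+1+(j'+1) = (m₀+1+1)+1 from by omega,
                  fcut_pad p (m₀+1+1) e' (by omega)]
                linear_combination p * hEq + hEqC
          · -- A + B = 1 + p·f_m(d)
            left
            refine ⟨2 * (2^(i'+j') + d), by omega, ?_⟩
            rw [show i'+1+(j'+1) = (i'+j'+1)+1 from by omega,
              fcut_pad p (i'+j'+1) (2^(i'+j') + d) (by omega),
              fcut_ge p (show d < 2^(i'+j') by omega)]
            linear_combination p * hEq + (fcut p (i'+j') d) * hp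
        · -- case (0,1) : symmetric, use master_mix with swapped arguments
          obtain ⟨b', rfl⟩ := Nat.exists_eq_add_of_le hb0
          have hb' : b' < 2 ^ j' := by omega
          have H := master_mix hp N' IH j' i' b' a (by omega) hb' ha0
          rw [add_comm (fcut p (j'+1) (2^j' + b')) (fcut p (i'+1) a)] at H
          rw [show j'+i'+1+1 = i'+1+(j'+1) from by omega] at H
          exact H
      · obtain ⟨a', rfl⟩ := Nat.exists_eq_add_of_le ha0
        have ha' : a' < 2 ^ i' := by omega
        rcases Nat.lt_or_ge b (2 ^ j') with hb0 | hb0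
        · -- case (1,0) : master_mix directly
          have H := master_mix hp N' IH i' j' a' b (by omega) ha' hb0
          rw [show i'+j'+1+1 = i'+1+(j'+1) from by omega] at H
          exact H
        · -- case (1,1)
          obtain ⟨b', rfl⟩ := Nat.exists_eq_add_of_le hb0
          have hb' : b' < 2 ^ j' := by omega
          have hT := IH i' j' a' b' (by omega) ha' hb'
          rw [fcut_ge p ha', fcut_ge p hb']
          rcases hT with ⟨c, hc, hEq⟩ | ⟨d, hd, hEq⟩ | ⟨d, hd1, hEq⟩
          · -- A + B = f_m(c)
            rcases Nat.eq_zero_or_pos (i'+j') with hm0 | hm0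
            · -- m = 0 : sum = 2p = 1 + p·f_2(1)
              have hi0 : i' = 0 := by omega
              have hj0 : j' = 0 := by omega
              subst hi0; subst hj0
              right; right
              refine ⟨1, by norm_num, ?_⟩
              have hf11 : fcut p (0+1) 1 = p + (1-p) * fcut p 0 0 := by
                have := fcut_ge p (ℓ := 0) (n := 0) (by norm_num)
                simpa using this
              have hf21 : fcut p (0+1+(0+1)) 1 = p * fcut p (0+1) 1 := by
                exact fcut_lt p (by norm_num)
              rw [hf21, hf11, fcut_zero, fcut_zero, fcut_zero]
              linear_combination (1-p) * hp
            · rcases lemA hp (i'+j') hm0 c hc with ⟨c', hc', hEqA⟩ | ⟨e₀, he₀, hEqA⟩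
              · right; right
                refine ⟨2 * c', by omega, ?_⟩
                rw [show i'+1+(j'+1) = (i'+j'+1)+1 from by omega,
                  fcut_pad p (i'+j'+1) c' (by omega), fcut_lt p hc']
                linear_combination (1-p) * hEq + p^2 * hEqA + (1 - p - fcut p (i'+j') c) * hp
              · right; right
                refine ⟨2^(i'+j'+1) + e₀, by omega, ?_⟩
                rw [show i'+1+(j'+1) = (i'+j'+1)+1 from by omega,
                  fcut_ge p (show e₀ < 2^(i'+j'+1) by omega)]
                linear_combination (1-p) * hEq + (1-p) * hEqA
          · -- A + B = 1 + f_m(d)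
            right; left
            refine ⟨2 * (2^(i'+j') + d), by omega, ?_⟩
            rw [show i'+1+(j'+1) = (i'+j'+1)+1 from by omega,
              fcut_pad p (i'+j'+1) (2^(i'+j') + d) (by omega),
              fcut_ge p (show d < 2^(i'+j') by omega)]
            linear_combination (1-p) * hEq
          · -- A + B = 1 + p·f_m(d)
            right; left
            refine ⟨2^(i'+j'+1) + d, by omega, ?_⟩
            rw [show i'+1+(j'+1) = (i'+j'+1)+1 from by omega,
              fcut_ge p (show d < 2^(i'+j'+1) by omega),
              fcut_lt p (show d < 2^(i'+j') by omega)]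
            linear_combination (1-p) * hEq

end Golden

/-- for `p = φ - 1`, for all `i, j, a, b ∈ ℕ` with `a < 2^i` and `b < 2^j`,
the sum `f_i a + f_j b` is either `f_{i+j} c` for some `c < 2^{i+j}`, or
`1 + f_{i+j+1} d` for some `d < 2^{i+j+1}`. -/
theorem golden_fcut_add (i j a b : ℕ) (ha : a < 2 ^ i) (hb : b < 2 ^ j) :
    (∃ c : ℕ, c < 2 ^ (i + j) ∧
      fcut (phi - 1) i a + fcut (phi - 1) j b = fcut (phi - 1) (i + j) c) ∨
    (∃ d : ℕ, d < 2 ^ (i + j + 1) ∧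
      fcut (phi - 1) i a + fcut (phi - 1) j b = 1 + fcut (phi - 1) (i + j + 1) d) := by
  have h5 : Real.sqrt 5 ^ 2 = 5 := Real.sq_sqrt (by norm_num)
  have hp : (phi - 1) ^ 2 = 1 - (phi - 1) := by
    rw [phi]; linear_combination (1/4 : ℝ) * h5
  have hE : (2:ℕ)^(i+j+1) = 2 * 2^(i+j) := by ring
  rcases master hp (i+j) i j a b le_rfl ha hb with ⟨c, hc, hEq⟩ | ⟨d, hd, hEq⟩ | ⟨e, he, hEq⟩
  · exact Or.inl ⟨c, hc, hEq⟩
  · right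
    refine ⟨2 * d, by omega, ?_⟩
    rw [show i+j+1 = (i+j)+1 from rfl, fcut_pad (phi-1) (i+j) d hd]
    exact hEq
  · right
    refine ⟨e, by omega, ?_⟩
    rw [show i+j+1 = (i+j)+1 from rfl, fcut_lt (phi-1) (show e < 2^(i+j) by omega)]
    exact hEq
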